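/- arXiv:2507.15083 — 5 statements merged into one kernel-verified Lean document; each statement's English description precedes it below -/
import Mathlib

section
/- Let p be a prime, A = (ℤ_p)^k with k ≥ 1, and T the caterpillar C(h₁, h₂, h₃) with three spine vertices carrying h₁, h₂, h₃ pendant leaves respectively. If h₁ ≡ 0 (mod p), h₂ ≡ p−2 (mod p), and h₃ ≡ p−1 (mod p), then T has no A-rainbow labeling. -/
/-- Edge-label function of the caterpillar `C(h₁,h₂,h₃)` induced by a vertex labeling `f`.
The vertices are the three spine vertices (`Fin 3`) together with the pendant leaves;
the edges are the two spine edges (`Fin 2`) together with the pendant edges. -/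
def catLabel {A : Type*} [AddCommGroup A] {h₁ h₂ h₃ : ℕ}
    (f : Fin 3 ⊕ (Fin h₁ ⊕ Fin h₂ ⊕ Fin h₃) → A) :
    Fin 2 ⊕ (Fin h₁ ⊕ Fin h₂ ⊕ Fin h₃) → A
  | .inl i => f (.inl i.castSucc) + f (.inl i.succ)
  | .inr (.inl j) => f (.inl 0) + f (.inr (.inl j))
  | .inr (.inr (.inl j)) => f (.inl 1) + f (.inr (.inr (.inl j)))
  | .inr (.inr (.inr j)) => f (.inl 2) + f (.inr (.inr (.inr j)))

/-- The caterpillar `C(h₁,h₂,h₃)` has an `A`-rainbow labeling: a bijective vertex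
labeling by the elements of `A` whose induced edge labels are pairwise distinct. -/
def IsRainbowCat (h₁ h₂ h₃ : ℕ) (A : Type*) [AddCommGroup A] : Prop :=
  ∃ f : Fin 3 ⊕ (Fin h₁ ⊕ Fin h₂ ⊕ Fin h₃) → A,
    Function.Bijective f ∧ Function.Injective (catLabel f)

/-!
Double-count the edge labels. A bijective labeling makes the vertex labels sum to `∑ x : A, x`, and
each vertex label is counted once per incident edge, so the edge labels sum to
`∑ x : A, x + h₁ a + (h₂ + 1) b + h₃ c`, where `a, b, c` label the spine. Since `T` has
`|A| - 1` edges, injective edge labels miss exactly one element `m` of `A`, so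
`m = -(h₁ a + (h₂ + 1) b + h₃ c)`. Under the congruences `h₁ ≡ 0`, `h₂ ≡ -2`, `h₃ ≡ -1 (mod p)`
this is `b + c`, the label of the second spine edge: a contradiction.
-/

open Finset

theorem sum_catLabel {A : Type*} [AddCommGroup A] {h₁ h₂ h₃ : ℕ}
    (f : Fin 3 ⊕ (Fin h₁ ⊕ Fin h₂ ⊕ Fin h₃) → A) :
    ∑ e, catLabel f e =
      ∑ v, f v + h₁ • f (.inl 0) + (h₂ + 1) • f (.inl 1) + h₃ • f (.inl 2) := by
  simp only [Fintype.sum_sum_type, Fin.sum_univ_two, Fin.sum_univ_three, catLabel,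
    sum_add_distrib, sum_const, card_univ, Fintype.card_fin, Fin.castSucc_zero,
    Fin.castSucc_one, Fin.succ_zero_eq_one, Fin.succ_one_eq_two, succ_nsmul]
  abel

theorem exists_notMem_range_add_sum_eq {E A : Type*} [Fintype E] [Fintype A] [AddCommMonoid A]
    {g : E → A} (hg : Function.Injective g) (hcard : Fintype.card A = Fintype.card E + 1) :
    ∃ m ∉ Set.range g, m + ∑ e, g e = ∑ x, x := by
  classical
  have hcompl : (univ.image g)ᶜ.card = 1 := by
    rw [card_compl, card_image_of_injective _ hg, card_univ, hcard, Nat.add_sub_cancel_left]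
  obtain ⟨m, hm⟩ := card_eq_one.mp hcompl
  refine ⟨m, fun hmg => ?_, ?_⟩
  · obtain ⟨e, rfl⟩ := hmg
    simpa using hm.ge (mem_singleton_self (g e))
  · rw [← sum_compl_add_sum (univ.image g), hm, sum_singleton,
      sum_image fun x _ y _ hxy => hg hxy]

theorem IsRainbowCat.exists_neg_notMem_range {A : Type*} [AddCommGroup A] [Fintype A]
    {h₁ h₂ h₃ : ℕ} (hT : IsRainbowCat h₁ h₂ h₃ A)
    (hcard : Fintype.card A = h₁ + h₂ + h₃ + 3) :
    ∃ f : Fin 3 ⊕ (Fin h₁ ⊕ Fin h₂ ⊕ Fin h₃) → A,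
      -(h₁ • f (.inl 0) + (h₂ + 1) • f (.inl 1) + h₃ • f (.inl 2)) ∉ Set.range (catLabel f) := by
  obtain ⟨f, hbij, hinj⟩ := hT
  have hcardE : Fintype.card A = Fintype.card (Fin 2 ⊕ (Fin h₁ ⊕ Fin h₂ ⊕ Fin h₃)) + 1 := by
    simp only [hcard, Fintype.card_sum, Fintype.card_fin]; ring
  obtain ⟨m, hm, hsum⟩ := exists_notMem_range_add_sum_eq hinj hcardE
  have hvert : ∑ v, f v = ∑ x, x := Fintype.sum_bijective f hbij _ _ fun _ => rfl
  rw [sum_catLabel, hvert] at hsum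
  have hm_eq : m = -(h₁ • f (.inl 0) + (h₂ + 1) • f (.inl 1) + h₃ • f (.inl 2)) :=
    eq_neg_of_add_eq_zero_left <| by
      refine add_left_cancel (a := ∑ x : A, x) ?_
      rw [add_zero]
      convert hsum using 1
      abel
  exact ⟨f, hm_eq ▸ hm⟩

theorem ZMod.natCast_eq_neg_of_mod_eq_sub {p n r : ℕ} (hr : r ≤ p) (h : n % p = p - r) :
    (n : ZMod p) = -r := by
  rw [← ZMod.natCast_mod, h, Nat.cast_sub hr, ZMod.natCast_self, zero_sub]

theorem stmt2_general (p k : ℕ) (hp : p.Prime) (h₁ h₂ h₃ : ℕ)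
    (horder : h₁ + h₂ + h₃ + 3 = p ^ k)
    (hh₁ : h₁ % p = 0) (hh₂ : h₂ % p = p - 2) (hh₃ : h₃ % p = p - 1) :
    ¬ IsRainbowCat h₁ h₂ h₃ (Fin k → ZMod p) := by
  have : NeZero p := ⟨hp.ne_zero⟩
  intro hT
  obtain ⟨f, hmiss⟩ := hT.exists_neg_notMem_range (by simp [horder])
  have e₁ : (h₁ : ZMod p) = 0 := (ZMod.natCast_eq_zero_iff h₁ p).2 (Nat.dvd_of_mod_eq_zero hh₁)
  have e₂ : ((h₂ + 1 : ℕ) : ZMod p) = -1 := by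
    push_cast [ZMod.natCast_eq_neg_of_mod_eq_sub hp.two_le hh₂]; ring
  have e₃ : (h₃ : ZMod p) = -1 := by
    simpa using ZMod.natCast_eq_neg_of_mod_eq_sub hp.one_le hh₃
  refine hmiss ⟨.inl 1, ?_⟩
  simp only [← Nat.cast_smul_eq_nsmul (ZMod p), e₁, e₂, e₃, catLabel]
  simp [add_comm]

theorem stmt2 (p k : ℕ) (hp : p.Prime) (hk : 1 ≤ k) (h₁ h₂ h₃ : ℕ)
    (horder : h₁ + h₂ + h₃ + 3 = p ^ k)
    (hh₁ : h₁ % p = 0) (hh₂ : h₂ % p = p - 2) (hh₃ : h₃ % p = p - 1) :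
    ¬ IsRainbowCat h₁ h₂ h₃ (Fin k → ZMod p) :=
  stmt2_general p k hp h₁ h₂ h₃ horder hh₁ hh₂ hh₃
end

section
/- Let A = (ℤ_2)^k with k ≥ 2, and T = C(h₁, h₂, h₃) a caterpillar with three spine vertices of order 2^k. Then T has an A-rainbow labeling if and only if h₁ and h₃ are even and h₂ is odd. -/
/-!
Over `ZMod 2` an edge label is `f u + f v`, so the sum of all edge labels plus the sum of all
vertex labels counts every vertex label once more than the degree of its vertex: the leaves
cancel, and what is left is `h₁ • x + h₃ • y + |A| • c`, where `x`, `y` are the two spine-edge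
labels and `c` is the middle spine label. For a rainbow labeling of `(ℤ₂)^k` the two sums run over
all elements and over all nonzero elements, so both vanish when `k ≥ 2`. Being distinct and
nonzero, `x` and `y` are linearly independent, so `h₁` and `h₃` are even, and `h₂` is odd since
`h₁ + h₂ + h₃ + 3 = 2^k`.

Conversely, read a number `n < 2^k` as its vector of binary digits, so that `^^^` becomes
addition. With spine labels `2, 0, b`, each leaf of the middle vertex has its own label as edge
label, and it remains to number the other leaves by `[4, 4 + h₁ + h₃)` so that `^^^ 2` on the
first `h₁` and `^^^ b` on the last `h₃` numbers again give all of `[4, 4 + h₁ + h₃)`. Taking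
`b = 1` or `b = 3` according to `h₁ mod 4` does this unless `h₁ ≡ 2` and `h₃ ≡ 0 (mod 4)`, and
that case follows by reversing the caterpillar.
-/

open Finset Function

section ZModTwoModule

variable {A : Type*} [AddCommGroup A] [Module (ZMod 2) A]

lemma zmod_two_add_self (x : A) : x + x = 0 := by
  rw [← two_nsmul, ← Nat.cast_smul_eq_nsmul (ZMod 2), ZMod.natCast_self, zero_smul]

lemma eq_of_add_eq_zero_zmod_two {x y : A} (h : x + y = 0) : x = y := by
  rw [← add_right_cancel_iff (a := y), h, zmod_two_add_self]

lemma linearIndependent_pair_zmod_two {x y : A} (hx : x ≠ 0) (hy : y ≠ 0) (hxy : x ≠ y) :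
    LinearIndependent (ZMod 2) ![x, y] := by
  have h01 : ∀ a : ZMod 2, a = 0 ∨ a = 1 := by decide
  refine LinearIndependent.pair_iff.2 fun s t h => ?_
  rcases h01 s with rfl | rfl <;> rcases h01 t with rfl | rfl <;>
    simp only [zero_smul, one_smul, zero_add, add_zero] at h
  · exact ⟨rfl, rfl⟩
  · exact absurd h hy
  · exact absurd h hx
  · exact absurd (eq_of_add_eq_zero_zmod_two h) hxy

end ZModTwoModule

lemma sum_univ_fun_zmod_two {ι : Type*} [Fintype ι] [DecidableEq ι] (hι : 2 ≤ Fintype.card ι) :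
    ∑ v : ι → ZMod 2, v = 0 := by
  funext i
  obtain ⟨j, hji⟩ : ∃ j, j ≠ i := Fintype.exists_ne_of_one_lt_card hι i
  rw [Finset.sum_apply, Pi.zero_apply]
  -- pair `v` with `v + eⱼ`, which has the same `i`-th coordinate
  refine Finset.sum_ninvolution (fun v => v + Pi.single j 1) (fun v => ?_) (fun v _ => ?_)
    (fun _ => mem_univ _) (fun v => ?_)
  · simp [hji.symm, zmod_two_add_self]
  · simp
  · rw [add_assoc, zmod_two_add_self, add_zero]

section Caterpillar

variable {A : Type*} [AddCommGroup A] [Module (ZMod 2) A] {h₁ h₂ h₃ : ℕ}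
  {f : Fin 3 ⊕ (Fin h₁ ⊕ Fin h₂ ⊕ Fin h₃) → A}

lemma catLabel_ne_zero (hf : Injective f) (e : Fin 2 ⊕ (Fin h₁ ⊕ Fin h₂ ⊕ Fin h₃)) :
    catLabel f e ≠ 0 := by
  rcases e with i | j | j | j <;> intro he <;> have h := hf (eq_of_add_eq_zero_zmod_two he)
  · exact (Fin.castSucc_lt_succ (i := i)).ne (Sum.inl_injective h)
  all_goals exact Sum.inl_ne_inr h

lemma image_catLabel_subset_erase_zero [Fintype A] [DecidableEq A] (hf : Injective f) :
    univ.image (catLabel f) ⊆ univ.erase 0 := by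
  intro x hx
  obtain ⟨e, -, rfl⟩ := mem_image.1 hx
  exact mem_erase.2 ⟨catLabel_ne_zero hf e, mem_univ _⟩

lemma injective_catLabel_iff [Fintype A] [DecidableEq A] (hf : Injective f)
    (hcard : h₁ + h₂ + h₃ + 3 = Fintype.card A) :
    Injective (catLabel f) ↔ univ.erase 0 ⊆ univ.image (catLabel f) := by
  have hcardE : #(univ.erase (0 : A)) = #(univ : Finset (Fin 2 ⊕ (Fin h₁ ⊕ Fin h₂ ⊕ Fin h₃))) := by
    simp only [card_erase_of_mem (mem_univ _), card_univ, Fintype.card_sum, Fintype.card_fin]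
    omega
  have hsub := image_catLabel_subset_erase_zero hf
  rw [← Set.injOn_univ, ← coe_univ, ← card_image_iff]
  constructor
  · intro h
    exact (eq_of_subset_of_card_le hsub (h.trans hcardE.symm).ge).symm.subset
  · intro h
    exact le_antisymm ((card_le_card hsub).trans hcardE.le) (hcardE ▸ card_le_card h)

lemma sum_catLabel_add_sum :
    ∑ e, catLabel f e + ∑ v, f v = (h₁ : ZMod 2) • catLabel f (.inl 0) +
      (h₃ : ZMod 2) • catLabel f (.inl 1) + ((h₁ + h₂ + h₃ + 3 : ℕ) : ZMod 2) • f (.inl 1) := by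
  simp only [Fintype.sum_sum_type, Fin.sum_univ_two, Fin.sum_univ_three, catLabel,
    sum_add_distrib, sum_const, card_univ, Fintype.card_fin, ← Nat.cast_smul_eq_nsmul (ZMod 2),
    Fin.castSucc_zero, Fin.castSucc_one, Fin.succ_zero_eq_one, Fin.succ_one_eq_two]
  match_scalars <;> grind

theorem IsRainbowCat.even_and_even_and_odd [Fintype A] [DecidableEq A]
    (hsum : ∑ x : A, x = 0) (hcard : h₁ + h₂ + h₃ + 3 = Fintype.card A)
    (heven : Even (Fintype.card A)) (H : IsRainbowCat h₁ h₂ h₃ A) :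
    Even h₁ ∧ Even h₃ ∧ Odd h₂ := by
  obtain ⟨f, hf, hE⟩ := H
  have hsumV : ∑ v, f v = 0 := (hf.sum_comp id).trans hsum
  have himage : univ.image (catLabel f) = univ.erase 0 :=
    (image_catLabel_subset_erase_zero hf.1).antisymm ((injective_catLabel_iff hf.1 hcard).1 hE)
  have hsumE : ∑ e, catLabel f e = 0 :=
    calc ∑ e, catLabel f e = ∑ x ∈ univ.image (catLabel f), x :=
          (sum_image (f := fun x => x) fun _ _ _ _ h => hE h).symm
      _ = 0 := by rw [himage, sum_erase (f := fun x => x) univ rfl, hsum]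
  have key := sum_catLabel_add_sum (f := f)
  rw [hsumE, hsumV, add_zero, hcard, (ZMod.natCast_eq_zero_iff_even).2 heven, zero_smul,
    add_zero] at key
  have hind := linearIndependent_pair_zmod_two (catLabel_ne_zero hf.1 (.inl 0))
    (catLabel_ne_zero hf.1 (.inl 1)) (hE.ne (Sum.inl_injective.ne (by decide)))
  obtain ⟨h1, h3⟩ := LinearIndependent.pair_iff.1 hind _ _ key.symm
  rw [ZMod.natCast_eq_zero_iff_even] at h1 h3
  refine ⟨h1, h3, ?_⟩
  rw [Nat.even_iff] at h1 h3 heven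
  rw [Nat.odd_iff]
  omega

end Caterpillar

def leafReverse (h₁ h₂ h₃ : ℕ) : Fin h₃ ⊕ Fin h₂ ⊕ Fin h₁ ≃ Fin h₁ ⊕ Fin h₂ ⊕ Fin h₃ :=
  (Equiv.sumComm _ _).trans
    (((Equiv.sumComm _ _).sumCongr (Equiv.refl _)).trans (Equiv.sumAssoc _ _ _))

lemma catLabel_comp_reverse {A : Type*} [AddCommGroup A] {h₁ h₂ h₃ : ℕ}
    (f : Fin 3 ⊕ (Fin h₁ ⊕ Fin h₂ ⊕ Fin h₃) → A) :
    catLabel (f ∘ Equiv.sumCongr Fin.revPerm (leafReverse h₁ h₂ h₃)) =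
      catLabel f ∘ Equiv.sumCongr Fin.revPerm (leafReverse h₁ h₂ h₃) := by
  funext e
  rcases e with i | j | j | j
  · fin_cases i <;> exact add_comm _ _
  all_goals rfl

theorem IsRainbowCat.symm {A : Type*} [AddCommGroup A] {h₁ h₂ h₃ : ℕ}
    (H : IsRainbowCat h₁ h₂ h₃ A) : IsRainbowCat h₃ h₂ h₁ A := by
  obtain ⟨f, hf, hE⟩ := H
  refine ⟨_, hf.comp (Equiv.sumCongr Fin.revPerm (leafReverse h₁ h₂ h₃)).bijective, ?_⟩
  rw [catLabel_comp_reverse]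
  exact hE.comp (Equiv.injective _)

def binaryVec (k n : ℕ) : Fin k → ZMod 2 := fun i => if n.testBit i then 1 else 0

@[simp]
lemma binaryVec_zero (k : ℕ) : binaryVec k 0 = 0 := by
  funext i; simp [binaryVec]

lemma binaryVec_xor (k m n : ℕ) : binaryVec k (m ^^^ n) = binaryVec k m + binaryVec k n := by
  funext i
  simp only [binaryVec, Nat.testBit_xor, Pi.add_apply]
  cases m.testBit i <;> cases n.testBit i <;> decide

lemma binaryVec_injOn (k : ℕ) : Set.InjOn (binaryVec k) (Set.Iio (2 ^ k)) := by
  intro m hm n hn h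
  refine Nat.eq_of_testBit_eq fun i => ?_
  by_cases hi : i < k
  · have := congrFun h ⟨i, hi⟩
    simp only [binaryVec] at this
    cases hm : m.testBit i <;> cases hn : n.testBit i <;> simp_all
  · have hik : 2 ^ k ≤ 2 ^ i := Nat.pow_le_pow_right two_pos (not_lt.1 hi)
    rw [Nat.testBit_eq_false_of_lt (lt_of_lt_of_le hm hik),
      Nat.testBit_eq_false_of_lt (lt_of_lt_of_le hn hik)]

lemma exists_binaryVec_eq (k : ℕ) (x : Fin k → ZMod 2) : ∃ n < 2 ^ k, binaryVec k n = x := by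
  have himage : (range (2 ^ k)).image (binaryVec k) = univ := by
    refine eq_univ_of_card _ ?_
    rw [card_image_of_injOn (by simpa using binaryVec_injOn k)]
    simp
  have hx : x ∈ (range (2 ^ k)).image (binaryVec k) := himage ▸ mem_univ x
  simpa using hx

def xorLabel {h₁ h₂ h₃ : ℕ} (N : Fin 3 ⊕ (Fin h₁ ⊕ Fin h₂ ⊕ Fin h₃) → ℕ) :
    Fin 2 ⊕ (Fin h₁ ⊕ Fin h₂ ⊕ Fin h₃) → ℕ
  | .inl i => N (.inl i.castSucc) ^^^ N (.inl i.succ)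
  | .inr (.inl j) => N (.inl 0) ^^^ N (.inr (.inl j))
  | .inr (.inr (.inl j)) => N (.inl 1) ^^^ N (.inr (.inr (.inl j)))
  | .inr (.inr (.inr j)) => N (.inl 2) ^^^ N (.inr (.inr (.inr j)))

lemma catLabel_binaryVec_comp {k h₁ h₂ h₃ : ℕ} (N : Fin 3 ⊕ (Fin h₁ ⊕ Fin h₂ ⊕ Fin h₃) → ℕ) :
    catLabel (binaryVec k ∘ N) = binaryVec k ∘ xorLabel N := by
  funext e
  rcases e with i | j | j | j <;> simp [catLabel, xorLabel, binaryVec_xor]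

theorem isRainbowCat_of_xorLabel {k h₁ h₂ h₃ : ℕ} (N : Fin 3 ⊕ (Fin h₁ ⊕ Fin h₂ ⊕ Fin h₃) → ℕ)
    (hcard : h₁ + h₂ + h₃ + 3 = 2 ^ k) (hN : ∀ n < 2 ^ k, ∃ v, N v = n)
    (hE : ∀ n < 2 ^ k, n ≠ 0 → ∃ e, xorLabel N e = n) :
    IsRainbowCat h₁ h₂ h₃ (Fin k → ZMod 2) := by
  have hcard' : h₁ + h₂ + h₃ + 3 = Fintype.card (Fin k → ZMod 2) := by simpa using hcard
  have hf : Bijective (binaryVec k ∘ N) := by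
    refine (Fintype.bijective_iff_surjective_and_card _).2 ⟨fun x => ?_, ?_⟩
    · obtain ⟨n, hn, rfl⟩ := exists_binaryVec_eq k x
      obtain ⟨v, rfl⟩ := hN n hn
      exact ⟨v, rfl⟩
    · simp only [Fintype.card_sum, Fintype.card_fin, ← hcard']
      omega
  refine ⟨_, hf, (injective_catLabel_iff hf.1 hcard').2 fun x hx => ?_⟩
  obtain ⟨n, hn, rfl⟩ := exists_binaryVec_eq k x
  obtain ⟨e, rfl⟩ := hE n hn (by rintro rfl; simp at hx)
  rw [catLabel_binaryVec_comp]
  exact mem_image_of_mem _ (mem_univ e)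

/-- `3 - h₁ % 4` is the element of `{0, 1, 2, 3}` left over by the spine labels
`2, 0, h₁ % 4 + 1` (for even `h₁`). -/
def vertexNum (h₁ h₂ h₃ : ℕ) : Fin 3 ⊕ (Fin h₁ ⊕ Fin h₂ ⊕ Fin h₃) → ℕ
  | .inl i => ![2, 0, h₁ % 4 + 1] i
  | .inr (.inl j) => 4 + j
  | .inr (.inr (.inl j)) => if j.val = 0 then 3 - h₁ % 4 else h₁ + h₃ + 3 + j
  | .inr (.inr (.inr j)) => 4 + h₁ + j

lemma xor_eq_of_lt_four (n : ℕ) {c : ℕ} (hc : c < 4) : n ^^^ c = 4 * (n / 4) + (n % 4 ^^^ c) := by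
  have hc' : c < 2 ^ 2 := hc
  rw [← Nat.div_add_mod (n ^^^ c) 4, show (4 : ℕ) = 2 ^ 2 from rfl, Nat.xor_div_two_pow,
    Nat.xor_mod_two_pow, Nat.div_eq_of_lt hc', Nat.mod_eq_of_lt hc', Nat.xor_zero]

section Numbering

variable {h₁ h₂ h₃ : ℕ}

lemma exists_vertexNum_eq (hh₁ : Even h₁) (hh₂ : 0 < h₂) {n : ℕ} (hn : n < h₁ + h₂ + h₃ + 3) :
    ∃ v, vertexNum h₁ h₂ h₃ v = n := by
  have := Nat.even_iff.1 hh₁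
  rcases (by omega : n = 0 ∨ n = 2 ∨ n = h₁ % 4 + 1 ∨ n = 3 - h₁ % 4 ∨ (4 ≤ n ∧ n < 4 + h₁) ∨
      (4 + h₁ ≤ n ∧ n < 4 + h₁ + h₃) ∨ 4 + h₁ + h₃ ≤ n) with h | h | h | h | h | h | h
  · exact ⟨.inl 1, by simp [vertexNum, h]⟩
  · exact ⟨.inl 0, by simp [vertexNum, h]⟩
  · exact ⟨.inl 2, by simp [vertexNum, h]⟩
  · exact ⟨.inr (.inr (.inl ⟨0, hh₂⟩)), by simp [vertexNum, h]⟩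
  · exact ⟨.inr (.inl ⟨n - 4, by omega⟩), by simp only [vertexNum]; omega⟩
  · exact ⟨.inr (.inr (.inr ⟨n - 4 - h₁, by omega⟩)), by simp only [vertexNum]; omega⟩
  · exact ⟨.inr (.inr (.inl ⟨n - h₁ - h₃ - 3, by omega⟩)),
      by simp only [vertexNum, show n - h₁ - h₃ - 3 ≠ 0 by omega, ↓reduceIte]; omega⟩

/-- Blocks of four consecutive numbers are cosets of `{0, 1, 2, 3}`; `[4, 4 + h₁)` ends in the
middle of a block exactly when `b = 3`, and then `[4 + h₁, 4 + h₁ + h₃)` completes that block. -/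
lemma xor_two_mem_or_xor_mem (hh₁ : Even h₁) (hh₃ : Even h₃) (hcase : h₁ % 4 = 0 ∨ h₃ % 4 = 2)
    {n : ℕ} (hn₀ : 4 ≤ n) (hn : n < 4 + h₁ + h₃) :
    (4 ≤ n ^^^ 2 ∧ n ^^^ 2 < 4 + h₁) ∨
      (4 + h₁ ≤ n ^^^ (h₁ % 4 + 1) ∧ n ^^^ (h₁ % 4 + 1) < 4 + h₁ + h₃) := by
  have := Nat.even_iff.1 hh₁
  have := Nat.even_iff.1 hh₃
  rw [xor_eq_of_lt_four n (by omega : 2 < 4), xor_eq_of_lt_four n (by omega : h₁ % 4 + 1 < 4)]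
  rcases (by omega : n % 4 = 0 ∨ n % 4 = 1 ∨ n % 4 = 2 ∨ n % 4 = 3) with hn4 | hn4 | hn4 | hn4 <;>
    rcases (by omega : h₁ % 4 = 0 ∨ h₁ % 4 = 2) with h | h <;>
    simp only [hn4, h, Nat.reduceXor, Nat.reduceAdd] <;> omega

lemma exists_xorLabel_vertexNum_eq (hh₁ : Even h₁) (hh₂ : 0 < h₂) (hh₃ : Even h₃)
    (hcase : h₁ % 4 = 0 ∨ h₃ % 4 = 2) {n : ℕ} (hn₀ : n ≠ 0) (hn : n < h₁ + h₂ + h₃ + 3) :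
    ∃ e, xorLabel (vertexNum h₁ h₂ h₃) e = n := by
  have := Nat.even_iff.1 hh₁
  rcases (by omega : n = 2 ∨ n = h₁ % 4 + 1 ∨ n = 3 - h₁ % 4 ∨ (4 ≤ n ∧ n < 4 + h₁ + h₃) ∨
      4 + h₁ + h₃ ≤ n) with h | h | h | ⟨h4, h⟩ | h
  · exact ⟨.inl 0, by simp [xorLabel, vertexNum, h]⟩
  · exact ⟨.inl 1, by simp [xorLabel, vertexNum, h]⟩
  · exact ⟨.inr (.inr (.inl ⟨0, hh₂⟩)), by simp [xorLabel, vertexNum, h]⟩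
  · rcases xor_two_mem_or_xor_mem hh₁ hh₃ hcase h4 h with h' | h'
    · refine ⟨.inr (.inl ⟨(n ^^^ 2) - 4, by omega⟩), ?_⟩
      simp [xorLabel, vertexNum, show 4 + ((n ^^^ 2) - 4) = n ^^^ 2 by omega, Nat.xor_comm 2]
    · refine ⟨.inr (.inr (.inr ⟨(n ^^^ (h₁ % 4 + 1)) - 4 - h₁, by omega⟩)), ?_⟩
      simp [xorLabel, vertexNum, Nat.xor_comm (h₁ % 4 + 1),
        show 4 + h₁ + ((n ^^^ (h₁ % 4 + 1)) - 4 - h₁) = n ^^^ (h₁ % 4 + 1) by omega]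
  · exact ⟨.inr (.inr (.inl ⟨n - h₁ - h₃ - 3, by omega⟩)),
      by simp [xorLabel, vertexNum, show n - h₁ - h₃ - 3 ≠ 0 by omega]; omega⟩

end Numbering

theorem isRainbowCat_of_even_of_odd {k h₁ h₂ h₃ : ℕ} (hcard : h₁ + h₂ + h₃ + 3 = 2 ^ k)
    (hh₁ : Even h₁) (hh₃ : Even h₃) (hh₂ : Odd h₂) : IsRainbowCat h₁ h₂ h₃ (Fin k → ZMod 2) := by
  wlog hcase : h₁ % 4 = 0 ∨ h₃ % 4 = 2 generalizing h₁ h₃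
  · have h₃_mod := Nat.even_iff.1 hh₃
    exact (this (by omega) hh₃ hh₁ (Or.inl (by omega))).symm
  exact isRainbowCat_of_xorLabel (vertexNum h₁ h₂ h₃) hcard
    (fun n hn => exists_vertexNum_eq hh₁ hh₂.pos (by omega))
    (fun n hn hn₀ => exists_xorLabel_vertexNum_eq hh₁ hh₂.pos hh₃ hcase hn₀ (by omega))

theorem stmt3_general (k : ℕ) (h₁ h₂ h₃ : ℕ)
    (horder : h₁ + h₂ + h₃ + 3 = 2 ^ k) :
    IsRainbowCat h₁ h₂ h₃ (Fin k → ZMod 2) ↔ Even h₁ ∧ Even h₃ ∧ Odd h₂ := by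
  have hk : 2 ≤ k := by
    by_contra! hk
    interval_cases k <;> omega
  refine ⟨IsRainbowCat.even_and_even_and_odd (sum_univ_fun_zmod_two (by simpa using hk))
    (by simpa using horder) (by simpa using (Nat.even_pow' (by omega)).2 even_two), ?_⟩
  rintro ⟨hh₁, hh₃, hh₂⟩
  exact isRainbowCat_of_even_of_odd horder hh₁ hh₃ hh₂

theorem stmt3 (k : ℕ) (hk : 2 ≤ k) (h₁ h₂ h₃ : ℕ)
    (horder : h₁ + h₂ + h₃ + 3 = 2 ^ k) :
    IsRainbowCat h₁ h₂ h₃ (Fin k → ZMod 2) ↔ Even h₁ ∧ Even h₃ ∧ Odd h₂ :=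
  stmt3_general k h₁ h₂ h₃ horder
end

section
/- Let p ≥ 5 be prime and A = (ℤ_p)^k with k ≥ 2. The caterpillar T = C(h₁, h₂, h₃) of order p^k with h₂ = 0 pendant leaves on the middle spine vertex, h₁ ≡ p−1 (mod p) and h₃ ≡ p−2 (mod p), has no A-rainbow labeling. -/
lemma nsmul_inj_aux {A : Type*} [AddCommGroup A] {p : ℕ} {D : A}
    (hord : addOrderOf D = p) {a b : ℕ} (hab : a ≤ b) (hb : b < p)
    (h : a • D = b • D) : a = b := by
  have h1 : a • D + (b - a) • D = a • D + 0 := by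
    rw [← add_nsmul, Nat.add_sub_cancel' hab, add_zero, h]
  have h2 : (b - a) • D = 0 := add_left_cancel h1
  have h3 : p ∣ b - a := by rw [← hord]; exact addOrderOf_dvd_of_nsmul_eq_zero h2
  have h4 : b - a = 0 := Nat.eq_zero_of_dvd_of_lt h3 (by omega)
  omega

lemma card_dvd_closed {A : Type*} [AddCommGroup A] [DecidableEq A]
    {p : ℕ} (hp : 0 < p) {D : A} (hord : addOrderOf D = p)
    (S : Finset A) (hS : ∀ x ∈ S, x + D ∈ S) : p ∣ S.card := by
  classical
  have hpD : p • D = 0 := by rw [← hord]; exact addOrderOf_nsmul_eq_zero D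
  suffices H : ∀ n (S : Finset A), (∀ x ∈ S, x + D ∈ S) → S.card = n → p ∣ S.card from
    H S.card S hS rfl
  intro n
  induction n using Nat.strong_induction_on with
  | _ n ih =>
    intro S hS hn
    rcases S.eq_empty_or_nonempty with rfl | ⟨x, hx⟩
    · simp
    have horb : ∀ m : ℕ, x + m • D ∈ S := by
      intro m
      induction m with
      | zero => simpa using hx
      | succ m ihm => rw [succ_nsmul, ← add_assoc]; exact hS _ ihm
    set O : Finset A := Finset.image (fun j : Fin p => x + (j : ℕ) • D) Finset.univ with hO
    have hmodsm : ∀ m : ℕ, x + m • D = x + (m % p) • D := by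
      intro m
      conv_lhs => rw [← Nat.div_add_mod m p]
      rw [add_nsmul, mul_nsmul, hpD, smul_zero, zero_add]
    have hmemO : ∀ m : ℕ, x + m • D ∈ O := by
      intro m
      rw [hO, Finset.mem_image]
      exact ⟨⟨m % p, Nat.mod_lt _ hp⟩, Finset.mem_univ _, (hmodsm m).symm⟩
    have hOS : O ⊆ S := by
      intro y hy
      rw [hO, Finset.mem_image] at hy
      obtain ⟨j, -, rfl⟩ := hy
      exact horb j
    have hinjO : Function.Injective (fun j : Fin p => x + (j : ℕ) • D) := by
      intro a b hab
      simp only at hab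
      have h1 : (a : ℕ) • D = (b : ℕ) • D := add_left_cancel hab
      apply Fin.ext
      rcases le_total (a : ℕ) (b : ℕ) with h | h
      · exact nsmul_inj_aux hord h b.2 h1
      · exact (nsmul_inj_aux hord h a.2 h1.symm).symm
    have hcardO : O.card = p := by
      rw [hO, Finset.card_image_of_injective _ hinjO, Finset.card_univ, Fintype.card_fin]
    have hpre : ∀ y, y + D ∈ O → y ∈ O := by
      intro y hy
      rw [hO, Finset.mem_image] at hy
      obtain ⟨j, -, hj⟩ := hy
      have h3 : D + (p - 1) • D = 0 := by
        rw [add_comm, ← succ_nsmul, Nat.sub_add_cancel hp, hpD]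
      have h2 : y = x + ((j : ℕ) + (p - 1)) • D := by
        calc y = y + (D + (p - 1) • D) := by rw [h3, add_zero]
        _ = (y + D) + (p - 1) • D := by rw [add_assoc]
        _ = (x + (j : ℕ) • D) + (p - 1) • D := by rw [hj]
        _ = x + ((j : ℕ) + (p - 1)) • D := by rw [add_nsmul, add_assoc]
      rw [h2]; exact hmemO _
    have hc2 : ∀ y ∈ S \ O, y + D ∈ S \ O := by
      intro y hy
      rw [Finset.mem_sdiff] at hy ⊢
      exact ⟨hS y hy.1, fun hc => hy.2 (hpre y hc)⟩
    have hcsd := Finset.card_sdiff_of_subset hOS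
    have h4 : O.card ≤ S.card := Finset.card_le_card hOS
    have hlt : (S \ O).card < n := by omega
    have hdvd2 := ih _ hlt (S \ O) hc2 rfl
    have h5 : S.card = (S \ O).card + O.card := (Finset.card_sdiff_add_card_eq_card hOS).symm
    rw [h5, hcardO]
    exact Nat.dvd_add hdvd2 dvd_rfl

theorem stmt6 (p k : ℕ) (hp : p.Prime) (hp5 : 5 ≤ p) (hk : 2 ≤ k) (h₁ h₃ : ℕ)
    (horder : h₁ + 0 + h₃ + 3 = p ^ k)
    (hh₁ : h₁ % p = p - 1) (hh₃ : h₃ % p = p - 2) :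
    ¬ IsRainbowCat h₁ 0 h₃ (Fin k → ZMod p) := by
  classical
  intro hR
  obtain ⟨f, hbij, hinj⟩ := hR
  have hfi := hbij.injective
  set α := f (Sum.inl 0) with hα
  set ε := f (Sum.inl 1) with hε
  set β := f (Sum.inl 2) with hβ
  set D := β - α with hD
  have hp0 : 0 < p := hp.pos
  have hspine : ∀ i j : Fin 3, f (Sum.inl i) = f (Sum.inl j) → i = j := by
    intro i j h
    exact Sum.inl_injective (hfi h)
  have hαβ : α ≠ β := fun h => by simpa using hspine 0 2 h
  have hεα : ε ≠ α := fun h => by simpa using hspine 1 0 h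
  have hεβ : ε ≠ β := fun h => by simpa using hspine 1 2 h
  have notc0 : ∀ (i : Fin h₁) (v : Fin 3), f (Sum.inr (Sum.inl i)) ≠ f (Sum.inl v) := by
    intro i v h
    exact absurd (hfi h) (by simp)
  have notc2 : ∀ (i : Fin h₃) (v : Fin 3),
      f (Sum.inr (Sum.inr (Sum.inr i))) ≠ f (Sum.inl v) := by
    intro i v h
    exact absurd (hfi h) (by simp)
  have notc02 : ∀ (i : Fin h₁) (j : Fin h₃),
      f (Sum.inr (Sum.inl i)) ≠ f (Sum.inr (Sum.inr (Sum.inr j))) := by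
    intro i j h
    exact absurd (hfi h) (by simp)
  have part : ∀ x : Fin k → ZMod p,
      x = α ∨ x = β ∨ x = ε ∨ (∃ j : Fin h₁, f (Sum.inr (Sum.inl j)) = x) ∨
        (∃ j : Fin h₃, f (Sum.inr (Sum.inr (Sum.inr j))) = x) := by
    intro x
    obtain ⟨v, rfl⟩ := hbij.surjective x
    rcases v with i | j | j | j
    · fin_cases i
      · exact Or.inl rfl
      · exact Or.inr (Or.inr (Or.inl rfl))
      · exact Or.inr (Or.inl rfl)
    · exact Or.inr (Or.inr (Or.inr (Or.inl ⟨j, rfl⟩)))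
    · exact j.elim0
    · exact Or.inr (Or.inr (Or.inr (Or.inr ⟨j, rfl⟩)))
  have ceq : ∀ y : Fin k → ZMod p, α + (y + D) = β + y := by
    intro y; rw [hD]; abel
  -- the forbidden configuration
  have forb : ∀ y : Fin k → ZMod p,
      ((∃ j : Fin h₃, f (Sum.inr (Sum.inr (Sum.inr j))) = y) ∨ y = ε) →
      ((∃ j : Fin h₁, f (Sum.inr (Sum.inl j)) = y + D) ∨ y + D = ε) → False := by
    intro y h2 h0
    rcases h2 with ⟨j2, hj2⟩ | rfl
    · rcases h0 with ⟨j1, hj1⟩ | h1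
      · have hlab : catLabel f (Sum.inr (Sum.inl j1)) =
            catLabel f (Sum.inr (Sum.inr (Sum.inr j2))) := by
          show f (Sum.inl 0) + f (Sum.inr (Sum.inl j1)) =
            f (Sum.inl 2) + f (Sum.inr (Sum.inr (Sum.inr j2)))
          rw [hj1, hj2, ← hα, ← hβ]
          exact ceq y
        exact absurd (hinj hlab) (by simp)
      · have hlab : catLabel f (Sum.inl 0) =
            catLabel f (Sum.inr (Sum.inr (Sum.inr j2))) := by
          show f (Sum.inl 0) + f (Sum.inl 1) =
            f (Sum.inl 2) + f (Sum.inr (Sum.inr (Sum.inr j2)))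
          rw [hj2, ← hα, ← hε, ← hβ, ← h1]
          exact ceq y
        exact absurd (hinj hlab) (by simp)
    · rcases h0 with ⟨j1, hj1⟩ | h1
      · have hlab : catLabel f (Sum.inr (Sum.inl j1)) = catLabel f (Sum.inl 1) := by
          show f (Sum.inl 0) + f (Sum.inr (Sum.inl j1)) =
            f (Sum.inl 1) + f (Sum.inl 2)
          rw [hj1, ← hα, ← hε, ← hβ, add_comm ε β]
          exact ceq ε
        exact absurd (hinj hlab) (by simp)
      · have hD0 : D = 0 := by
          have := h1
          rwa [add_eq_left] at this
        rw [hD] at hD0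
        exact hαβ (sub_eq_zero.mp hD0).symm
  have ruleA : ∀ y : Fin k → ZMod p,
      ((∃ j : Fin h₃, f (Sum.inr (Sum.inr (Sum.inr j))) = y) ∨ y = ε) →
      (y + D = α ∨ y + D = β ∨ ∃ j : Fin h₃, f (Sum.inr (Sum.inr (Sum.inr j))) = y + D) := by
    intro y hy
    rcases part (y + D) with h | h | h | h | h
    · exact Or.inl h
    · exact Or.inr (Or.inl h)
    · exact (forb y hy (Or.inr h)).elim
    · exact (forb y hy (Or.inl h)).elim
    · exact Or.inr (Or.inr h)
  have ruleB : ∀ y : Fin k → ZMod p,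
      ((∃ j : Fin h₁, f (Sum.inr (Sum.inl j)) = y + D) ∨ y + D = ε) →
      (y = α ∨ y = β ∨ ∃ j : Fin h₁, f (Sum.inr (Sum.inl j)) = y) := by
    intro y hy
    rcases part y with h | h | h | h | h
    · exact Or.inl h
    · exact Or.inr (Or.inl h)
    · exact (forb y (Or.inr h) hy).elim
    · exact Or.inr (Or.inr h)
    · exact (forb y (Or.inl h) hy).elim
  have hpD : p • D = 0 := by
    funext i
    simp only [Pi.smul_apply, Pi.zero_apply, nsmul_eq_mul, ZMod.natCast_self, zero_mul]
  have hDne : D ≠ 0 := by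
    rw [hD]
    exact sub_ne_zero.mpr (Ne.symm hαβ)
  have hord : addOrderOf D = p := by
    rcases hp.eq_one_or_self_of_dvd _ (addOrderOf_dvd_of_nsmul_eq_zero hpD) with h | h
    · exact absurd (AddMonoid.addOrderOf_eq_one_iff.mp h) hDne
    · exact h
  have hstep : ∀ n : ℕ, 1 ≤ n → ε - (n - 1) • D = (ε - n • D) + D := by
    intro n hn
    obtain ⟨m, rfl⟩ : ∃ m, n = m + 1 := ⟨n - 1, by omega⟩
    simp only [Nat.add_sub_cancel]
    rw [succ_nsmul]
    abel
  have Lc0 : ∀ m : ℕ,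
      (∀ j, 1 ≤ j → j ≤ m + 1 → ε - j • D ≠ α ∧ ε - j • D ≠ β) →
      ∃ i : Fin h₁, f (Sum.inr (Sum.inl i)) = ε - (m + 1) • D := by
    intro m
    induction m with
    | zero =>
      intro hj
      have hpre : (ε - 1 • D) + D = ε := by rw [one_nsmul]; abel
      rcases ruleB (ε - 1 • D) (Or.inr hpre) with h | h | h
      · exact absurd h (hj 1 le_rfl le_rfl).1
      · exact absurd h (hj 1 le_rfl le_rfl).2
      · exact h
    | succ n ihn =>
      intro hj
      have hc0 : ∃ i : Fin h₁, f (Sum.inr (Sum.inl i)) = ε - (n + 1) • D :=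
        ihn (fun j a b => hj j a (by omega))
      have hpre : (ε - (n + 1 + 1) • D) + D = ε - (n + 1) • D := by
        rw [succ_nsmul (n := n + 1)]
        abel
      have hpre2 : ∃ i : Fin h₁, f (Sum.inr (Sum.inl i)) = (ε - (n + 1 + 1) • D) + D := by
        rw [hpre]; exact hc0
      rcases ruleB _ (Or.inl hpre2) with h | h | h
      · exact absurd h (hj (n + 1 + 1) (by omega) (by omega)).1
      · exact absurd h (hj (n + 1 + 1) (by omega) (by omega)).2
      · exact h
  have hex : ∃ m, 1 ≤ m ∧ m ≤ p ∧ (ε - m • D = α ∨ ε - m • D = β) := by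
    by_contra hno
    push_neg at hno
    obtain ⟨i, hi⟩ := Lc0 (p - 1) (fun j a b => hno j a (by omega))
    rw [show p - 1 + 1 = p by omega, hpD, sub_zero, hε] at hi
    exact notc0 i 1 hi
  set M := Nat.find hex with hM
  obtain ⟨hM1, hMp, hhit⟩ : 1 ≤ M ∧ M ≤ p ∧ (ε - M • D = α ∨ ε - M • D = β) :=
    Nat.find_spec hex
  have hmin : ∀ j, 1 ≤ j → j < M → ε - j • D ≠ α ∧ ε - j • D ≠ β := by
    intro j hj1 hj2
    have h3 := Nat.find_min hex hj2
    push_neg at h3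
    exact h3 hj1 (by omega)
  have hMltp : M < p := by
    rcases Nat.lt_or_ge M p with h | h
    · exact h
    · exfalso
      have hMp' : M = p := le_antisymm hMp h
      rw [hMp', hpD, sub_zero] at hhit
      rcases hhit with h' | h'
      · exact hεα h'
      · exact hεβ h'
  have hB : ε - M • D = β := by
    rcases hhit with hA | hB
    · exfalso
      have h5 : ε - (M - 1) • D = β := by
        rw [hstep M hM1, hA, hD]; abel
      rcases Nat.lt_or_ge M 2 with h2 | h2
      · have hM1' : M - 1 = 0 := by omega
        rw [hM1', zero_nsmul, sub_zero] at h5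
        exact hεβ h5
      · obtain ⟨i, hi⟩ := Lc0 (M - 2) (fun j a b => hmin j a (by omega))
        rw [show M - 2 + 1 = M - 1 by omega, h5, hβ] at hi
        exact notc0 i 2 hi
    · exact hB
  -- the invariant finite set
  set S2 : Finset (Fin k → ZMod p) :=
    Finset.image (fun j : Fin h₃ => f (Sum.inr (Sum.inr (Sum.inr j)))) Finset.univ with hS2
  set path : Finset (Fin k → ZMod p) :=
    Finset.image (fun j : Fin M => ε - (j : ℕ) • D) Finset.univ with hpath
  set Stot := insert α (insert β (S2 ∪ path)) with hStot
  have memS2 : ∀ x, x ∈ S2 ↔ ∃ j : Fin h₃, f (Sum.inr (Sum.inr (Sum.inr j))) = x := by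
    intro x
    rw [hS2, Finset.mem_image]
    simp
  have mempath : ∀ x, x ∈ path ↔ ∃ j : ℕ, j < M ∧ ε - j • D = x := by
    intro x
    rw [hpath, Finset.mem_image]
    constructor
    · rintro ⟨j, -, hj⟩; exact ⟨j, j.2, hj⟩
    · rintro ⟨j, hj1, hj2⟩; exact ⟨⟨j, hj1⟩, Finset.mem_univ _, hj2⟩
  have hinjS2 : Function.Injective (fun j : Fin h₃ => f (Sum.inr (Sum.inr (Sum.inr j)))) := by
    intro a b hab
    have := hfi hab
    simpa using this
  have hcardS2 : S2.card = h₃ := by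
    rw [hS2, Finset.card_image_of_injective _ hinjS2, Finset.card_univ, Fintype.card_fin]
  have hinjpath : Function.Injective (fun j : Fin M => ε - (j : ℕ) • D) := by
    intro a b hab
    simp only at hab
    have h1 : (a : ℕ) • D = (b : ℕ) • D := by
      have := sub_right_injective hab
      exact this
    apply Fin.ext
    rcases le_total (a : ℕ) (b : ℕ) with h | h
    · exact nsmul_inj_aux hord h (lt_trans b.2 hMltp) h1
    · exact (nsmul_inj_aux hord h (lt_trans a.2 hMltp) h1.symm).symm
  have hcardpath : path.card = M := by
    rw [hpath, Finset.card_image_of_injective _ hinjpath, Finset.card_univ, Fintype.card_fin]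
  have hαS2 : α ∉ S2 := by
    rw [memS2]
    rintro ⟨j, hj⟩
    rw [hα] at hj
    exact notc2 j 0 hj
  have hβS2 : β ∉ S2 := by
    rw [memS2]
    rintro ⟨j, hj⟩
    rw [hβ] at hj
    exact notc2 j 2 hj
  have hαpath : α ∉ path := by
    rw [mempath]
    rintro ⟨j, hj1, hj2⟩
    rcases Nat.eq_zero_or_pos j with h0 | h0
    · rw [h0, zero_nsmul, sub_zero] at hj2
      exact hεα hj2
    · exact (hmin j h0 hj1).1 hj2
  have hβpath : β ∉ path := by
    rw [mempath]
    rintro ⟨j, hj1, hj2⟩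
    rcases Nat.eq_zero_or_pos j with h0 | h0
    · rw [h0, zero_nsmul, sub_zero] at hj2
      exact hεβ hj2
    · exact (hmin j h0 hj1).2 hj2
  have hdisj : Disjoint S2 path := by
    rw [Finset.disjoint_left]
    intro x hx1 hx2
    rw [memS2] at hx1
    rw [mempath] at hx2
    obtain ⟨j, hj⟩ := hx1
    obtain ⟨m, hm1, hm2⟩ := hx2
    rcases Nat.eq_zero_or_pos m with h0 | h0
    · rw [h0, zero_nsmul, sub_zero] at hm2
      rw [← hm2, hε] at hj
      exact notc2 j 1 hj
    · obtain ⟨i, hi⟩ := Lc0 (m - 1) (fun j' a b => hmin j' a (by omega))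
      rw [show m - 1 + 1 = m by omega, hm2, ← hj] at hi
      exact notc02 i j hi
  have hαtot : α ∉ insert β (S2 ∪ path) := by
    simp only [Finset.mem_insert, Finset.mem_union]
    rintro (h | h | h)
    exacts [hαβ h, hαS2 h, hαpath h]
  have hβtot : β ∉ S2 ∪ path := by
    simp only [Finset.mem_union]
    rintro (h | h)
    exacts [hβS2 h, hβpath h]
  have hcardtot : Stot.card = h₃ + M + 2 := by
    rw [hStot, Finset.card_insert_of_notMem hαtot, Finset.card_insert_of_notMem hβtot,
      Finset.card_union_of_disjoint hdisj, hcardS2, hcardpath]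
  have hclosed : ∀ x ∈ Stot, x + D ∈ Stot := by
    intro x hx
    rw [hStot, Finset.mem_insert, Finset.mem_insert, Finset.mem_union] at hx ⊢
    rcases hx with rfl | rfl | hx | hx
    · right; left
      rw [hD]; abel
    · right; right; right
      rw [mempath]
      refine ⟨M - 1, by omega, ?_⟩
      rw [hstep M hM1, hB]
    · rcases ruleA x (Or.inl ((memS2 x).mp hx)) with h | h | h
      · exact Or.inl h
      · exact Or.inr (Or.inl h)
      · exact Or.inr (Or.inr (Or.inl ((memS2 _).mpr h)))
    · obtain ⟨m, hm1, hm2⟩ := (mempath x).mp hx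
      rcases Nat.eq_zero_or_pos m with h0 | h0
      · have hxε : x = ε := by rw [← hm2, h0, zero_nsmul, sub_zero]
        rcases ruleA x (Or.inr hxε) with h | h | h
        · exact Or.inl h
        · exact Or.inr (Or.inl h)
        · exact Or.inr (Or.inr (Or.inl ((memS2 _).mpr h)))
      · right; right; right
        rw [mempath]
        refine ⟨m - 1, by omega, ?_⟩
        rw [hstep m h0, hm2]
  have hdvd : p ∣ Stot.card := card_dvd_closed hp0 hord Stot hclosed
  rw [hcardtot] at hdvd
  have hq : p ∣ h₃ + 2 := by
    have h6 := Nat.div_add_mod h₃ p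
    rw [hh₃] at h6
    obtain ⟨t, ht⟩ : ∃ t, p * (h₃ / p) = t := ⟨_, rfl⟩
    refine ⟨h₃ / p + 1, ?_⟩
    rw [Nat.mul_add, Nat.mul_one]
    rw [ht] at h6 ⊢
    omega
  have h7 : h₃ + M + 2 = h₃ + 2 + M := by omega
  rw [h7] at hdvd
  have hdvdM : p ∣ M := (Nat.dvd_add_right hq).mp hdvd
  have := Nat.le_of_dvd (by omega) hdvdM
  omega
end

section
/- Let p ≥ 5 be prime and A = (ℤ_p)^k with k ≥ 2. The caterpillar T = C(h₁, 1, h₃) of order p^k (exactly one pendant leaf on the middle spine vertex) with h₁ ≡ p−1 (mod p) and h₃ ≡ p−3 (mod p) has no A-rainbow labeling. -/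
noncomputable def ind (P : Prop) : ℤ := by classical exact if P then 1 else 0

lemma ind_pos {P : Prop} (h : P) : ind P = 1 := by simp [ind, h]
lemma ind_neg {P : Prop} (h : ¬P) : ind P = 0 := by simp [ind, h]
lemma ind_congr {P Q : Prop} (h : P ↔ Q) : ind P = ind Q := by
  by_cases hq : Q
  · rw [ind_pos (h.mpr hq), ind_pos hq]
  · rw [ind_neg (fun hp => hq (h.mp hp)), ind_neg hq]
lemma ind_nonneg {P : Prop} : 0 ≤ ind P := by
  by_cases h : P <;> simp [ind, h]
lemma ind_le_one {P : Prop} : ind P ≤ 1 := by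
  by_cases h : P <;> simp [ind, h]
lemma ind_cases (P : Prop) : ind P = 0 ∨ ind P = 1 := by
  by_cases h : P <;> simp [ind, h]

lemma sum_ind {J α : Type*} [Fintype J] (g : J → α) (hg : Function.Injective g) (w : α) :
    ∑ j, ind (g j = w) = ind (∃ j, g j = w) := by
  by_cases h : ∃ j, g j = w
  · obtain ⟨j₀, hj₀⟩ := h
    rw [ind_pos ⟨j₀, hj₀⟩, Finset.sum_eq_single j₀]
    · exact ind_pos hj₀
    · intro j _ hne; exact ind_neg (fun hh => hne (hg (hh.trans hj₀.symm)))
    · simp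
  · rw [ind_neg h]; exact Finset.sum_eq_zero (fun j _ => ind_neg (fun hh => h ⟨j, hh⟩))

lemma eq_iff_sub {G : Type*} [AddCommGroup G] {u v u' v' : G} (h : u - v = u' - v') :
    (u = v) ↔ (u' = v') := by
  constructor
  · intro huv
    have h2 : u' - v' = 0 := by rw [← h, huv, sub_self]
    exact sub_eq_zero.mp h2
  · intro huv
    have h2 : u - v = 0 := by rw [h, huv, sub_self]
    exact sub_eq_zero.mp h2

lemma smul_cancel {K : Type*} [Field K] {G : Type*} [AddCommGroup G] [Module K G] {s : K}
    (hs : s ≠ 0) {z : G} (h : s • z = 0) : z = 0 := by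
  have h2 := congrArg (fun y => s⁻¹ • y) h
  simpa [smul_smul, inv_mul_cancel₀ hs] using h2

lemma ind_eq_one {P : Prop} (h : ind P = 1) : P := by
  by_cases hP : P
  · exact hP
  · rw [ind_neg hP] at h; norm_num at h

theorem stmt7 (p k : ℕ) (hp : p.Prime) (hp5 : 5 ≤ p) (hk : 2 ≤ k) (h₁ h₃ : ℕ)
    (horder : h₁ + 1 + h₃ + 3 = p ^ k)
    (hh₁ : h₁ % p = p - 1) (hh₃ : h₃ % p = p - 3) :
    ¬ IsRainbowCat h₁ 1 h₃ (Fin k → ZMod p) := by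
  rintro ⟨f, hfb, hgl⟩
  haveI : Fact p.Prime := ⟨hp⟩
  haveI : NeZero p := ⟨by omega⟩
  have hfi := hfb.1
  set a := f (Sum.inl 0) with hadef
  set b := f (Sum.inl 1) with hbdef
  set c := f (Sum.inl 2) with hcdef
  set m := f (Sum.inr (Sum.inr (Sum.inl 0))) with hmdef
  set Φ : (Fin k → ZMod p) → ℤ :=
    fun w => ind (∃ j : Fin h₁, f (Sum.inr (Sum.inl j)) = w) with hPhidef
  set Ψ : (Fin k → ZMod p) → ℤ :=
    fun w => ind (∃ j : Fin h₃, f (Sum.inr (Sum.inr (Sum.inr j))) = w) with hPsidef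
  set d := a - c with hddef
  have hab : a ≠ b := fun h => by simpa using hfi h
  have hac : a ≠ c := fun h => by simpa using hfi h
  have hbc : b ≠ c := fun h => by simpa using hfi h
  have ham : a ≠ m := fun h => by simpa using hfi h
  have hPhia : Φ a = 0 := ind_neg (fun ⟨j, hj⟩ => by simpa using hfi hj)
  have hPhib : Φ b = 0 := ind_neg (fun ⟨j, hj⟩ => by simpa using hfi hj)
  have hPhic : Φ c = 0 := ind_neg (fun ⟨j, hj⟩ => by simpa using hfi hj)
  have hpk4 : 4 ≤ p ^ k := by omega
  have hcardA : Fintype.card (Fin k → ZMod p) = p ^ k := by simp [ZMod.card]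
  have hcardE : Fintype.card (Fin 2 ⊕ (Fin h₁ ⊕ Fin 1 ⊕ Fin h₃)) = p ^ k - 1 := by
    simp; omega
  obtain ⟨x, hx⟩ : ∃ x : Fin k → ZMod p, ∀ e, catLabel f e ≠ x := by
    by_contra h
    push_neg at h
    have hsurj : Function.Surjective (catLabel f) := fun z => h z
    have hle := Fintype.card_le_of_surjective _ hsurj
    rw [hcardA, hcardE] at hle
    omega
  have himage : Finset.univ.image (catLabel f) = Finset.univ.erase x := by
    apply Finset.eq_of_subset_of_card_le
    · intro y hy
      obtain ⟨e, _, he⟩ := Finset.mem_image.mp hy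
      exact Finset.mem_erase.mpr ⟨he ▸ hx e, Finset.mem_univ y⟩
    · rw [Finset.card_erase_of_mem (Finset.mem_univ x),
        Finset.card_image_of_injective _ hgl, Finset.card_univ, Finset.card_univ,
        hcardA, hcardE]
  have himg : ∀ z : Fin k → ZMod p, z ≠ x → ∃ e, catLabel f e = z := by
    intro z hz
    have hzin : z ∈ Finset.univ.image (catLabel f) := by
      rw [himage]
      exact Finset.mem_erase.mpr ⟨hz, Finset.mem_univ z⟩
    obtain ⟨e, _, he⟩ := Finset.mem_image.mp hzin
    exact ⟨e, he⟩
  have hΦ : ∀ v, Φ v = ind (∃ j : Fin h₁, f (Sum.inr (Sum.inl j)) = v) := fun v => rfl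
  have hΨ : ∀ v, Ψ v = ind (∃ j : Fin h₃, f (Sum.inr (Sum.inr (Sum.inr j))) = v) := fun v => rfl
  have inj1 : Function.Injective (fun j : Fin h₁ => f (Sum.inr (Sum.inl j))) := by
    intro j j' h
    have := hfi h
    simpa using this
  have inj3 : Function.Injective (fun j : Fin h₃ => f (Sum.inr (Sum.inr (Sum.inr j)))) := by
    intro j j' h
    have := hfi h
    simpa using this
  have inja1 : Function.Injective (fun j : Fin h₁ => a + f (Sum.inr (Sum.inl j))) := by
    intro j j' h
    have h2 : f (Sum.inr (Sum.inl j)) = f (Sum.inr (Sum.inl j')) := by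
      have h3 : a + f (Sum.inr (Sum.inl j)) = a + f (Sum.inr (Sum.inl j')) := h
      exact add_left_cancel h3
    have := hfi h2
    simpa using this
  have inja3 : Function.Injective (fun j : Fin h₃ => c + f (Sum.inr (Sum.inr (Sum.inr j)))) := by
    intro j j' h
    have h2 : f (Sum.inr (Sum.inr (Sum.inr j))) = f (Sum.inr (Sum.inr (Sum.inr j'))) := by
      have h3 : c + f (Sum.inr (Sum.inr (Sum.inr j))) = c + f (Sum.inr (Sum.inr (Sum.inr j'))) := h
      exact add_left_cancel h3
    have := hfi h2
    simpa using this
  have h2ne : (2 : ZMod p) ≠ 0 := by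
    have : ((2:ℕ) : ZMod p) ≠ 0 := by
      rw [Ne, ZMod.natCast_eq_zero_iff]
      intro hdvd
      have := Nat.le_of_dvd (by norm_num) hdvd
      omega
    simpa using this
  have hVI : ∀ w, ind (a = w) + ind (b = w) + ind (c = w) + ind (m = w) + Φ w + Ψ w = 1 := by
    intro w
    have h0 : ∑ v : Fin 3 ⊕ (Fin h₁ ⊕ Fin 1 ⊕ Fin h₃), ind (f v = w) = 1 := by
      rw [sum_ind f hfi w, ind_pos (hfb.2 w)]
    rw [Fintype.sum_sum_type, Fintype.sum_sum_type, Fintype.sum_sum_type,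
      Fin.sum_univ_three, Fin.sum_univ_one,
      sum_ind (fun j : Fin h₁ => f (Sum.inr (Sum.inl j))) inj1 w,
      sum_ind (fun j : Fin h₃ => f (Sum.inr (Sum.inr (Sum.inr j)))) inj3 w] at h0
    rw [hΦ, hΨ]
    rw [hadef, hbdef, hcdef, hmdef]
    linarith [h0]
  have hEI : ∀ z, ind (a + b = z) + ind (b + c = z) + ind (b + m = z)
      + ind (∃ j : Fin h₁, a + f (Sum.inr (Sum.inl j)) = z)
      + ind (∃ j : Fin h₃, c + f (Sum.inr (Sum.inr (Sum.inr j))) = z)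
      + ind (z = x) = 1 := by
    intro z
    have h0 : ∑ e : Fin 2 ⊕ (Fin h₁ ⊕ Fin 1 ⊕ Fin h₃), ind (catLabel f e = z)
        = 1 - ind (z = x) := by
      rw [sum_ind _ hgl z]
      by_cases hzx : z = x
      · rw [ind_pos hzx, ind_neg (fun hh : ∃ e, catLabel f e = z =>
          (hzx ▸ hh).elim (fun e he => hx e he))]
        norm_num
      · rw [ind_neg hzx, ind_pos (himg z hzx)]
        norm_num
    rw [Fintype.sum_sum_type, Fintype.sum_sum_type, Fintype.sum_sum_type,
      Fin.sum_univ_two, Fin.sum_univ_one] at h0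
    rw [show catLabel f (Sum.inl 0) = f (Sum.inl 0) + f (Sum.inl 1) from rfl,
      show catLabel f (Sum.inl 1) = f (Sum.inl 1) + f (Sum.inl 2) from rfl,
      show catLabel f (Sum.inr (Sum.inr (Sum.inl 0)))
        = f (Sum.inl 1) + f (Sum.inr (Sum.inr (Sum.inl 0))) from rfl,
      ] at h0
    simp only [show (∀ j : Fin h₁, catLabel f (Sum.inr (Sum.inl j))
        = f (Sum.inl 0) + f (Sum.inr (Sum.inl j))) from fun _ => rfl,
      show (∀ j : Fin h₃, catLabel f (Sum.inr (Sum.inr (Sum.inr j)))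
        = f (Sum.inl 2) + f (Sum.inr (Sum.inr (Sum.inr j)))) from fun _ => rfl] at h0
    rw [sum_ind (fun j : Fin h₁ => f (Sum.inl 0) + f (Sum.inr (Sum.inl j)))
        (by rw [← hadef]; exact inja1) z,
      sum_ind (fun j : Fin h₃ => f (Sum.inl 2) + f (Sum.inr (Sum.inr (Sum.inr j))))
        (by rw [← hcdef]; exact inja3) z] at h0
    rw [hadef, hbdef, hcdef, hmdef]
    linarith [h0]
  have hsumA : ∑ w : Fin k → ZMod p, w = 0 := by
    have h1 : ∑ w : Fin k → ZMod p, -w = ∑ w : Fin k → ZMod p, w :=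
      Equiv.sum_comp (Equiv.neg (Fin k → ZMod p)) (fun w => w)
    rw [Finset.sum_neg_distrib] at h1
    have h2 : (2:ZMod p) • (∑ w : Fin k → ZMod p, w) = 0 := by
      rw [two_smul]
      nth_rewrite 1 [← h1]
      exact neg_add_cancel _
    exact smul_cancel h2ne h2
  have hesum : ∑ e : Fin 2 ⊕ (Fin h₁ ⊕ Fin 1 ⊕ Fin h₃), catLabel f e = -x := by
    have hs1 : ∑ z ∈ Finset.univ.image (catLabel f), z
        = ∑ e : Fin 2 ⊕ (Fin h₁ ⊕ Fin 1 ⊕ Fin h₃), catLabel f e :=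
      Finset.sum_image (fun e _ e' _ h => hgl h)
    rw [himage] at hs1
    have h3 := Finset.sum_erase_add Finset.univ (fun z => z) (Finset.mem_univ x)
    rw [hsumA] at h3
    rw [← hs1]
    exact eq_neg_of_add_eq_zero_left h3
  have hvsum : ∑ v : Fin 3 ⊕ (Fin h₁ ⊕ Fin 1 ⊕ Fin h₃), f v = 0 := by
    rw [Fintype.sum_bijective f hfb _ (fun w => w) (fun v => rfl)]
    exact hsumA
  have hxval : x = a - (b + b) + (c + c + c) := by
    rw [Fintype.sum_sum_type, Fintype.sum_sum_type, Fintype.sum_sum_type,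
      Fin.sum_univ_two, Fin.sum_univ_one] at hesum
    rw [show catLabel f (Sum.inl 0) = f (Sum.inl 0) + f (Sum.inl 1) from rfl,
      show catLabel f (Sum.inl 1) = f (Sum.inl 1) + f (Sum.inl 2) from rfl,
      show catLabel f (Sum.inr (Sum.inr (Sum.inl 0)))
        = f (Sum.inl 1) + f (Sum.inr (Sum.inr (Sum.inl 0))) from rfl] at hesum
    simp only [show (∀ j : Fin h₁, catLabel f (Sum.inr (Sum.inl j))
        = f (Sum.inl 0) + f (Sum.inr (Sum.inl j))) from fun _ => rfl,
      show (∀ j : Fin h₃, catLabel f (Sum.inr (Sum.inr (Sum.inr j)))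
        = f (Sum.inl 2) + f (Sum.inr (Sum.inr (Sum.inr j)))) from fun _ => rfl] at hesum
    rw [Finset.sum_add_distrib, Finset.sum_add_distrib, Finset.sum_const,
      Finset.sum_const, Finset.card_univ, Finset.card_univ, Fintype.card_fin,
      Fintype.card_fin] at hesum
    rw [Fintype.sum_sum_type, Fintype.sum_sum_type, Fintype.sum_sum_type,
      Fin.sum_univ_three, Fin.sum_univ_one] at hvsum
    rw [← hadef, ← hbdef, ← hcdef, ← hmdef] at hesum hvsum
    -- smul facts
    have hcast1 : ((h₁ : ℕ) : ZMod p) = -1 := by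
      have h0 := Nat.div_add_mod h₁ p
      rw [hh₁] at h0
      calc ((h₁:ℕ) : ZMod p) = ((p * (h₁/p) + (p-1) : ℕ) : ZMod p) := by rw [h0]
      _ = -1 := by
          push_cast [Nat.cast_sub (show 1 ≤ p by omega)]
          rw [ZMod.natCast_self]
          ring
    have hcast3 : ((h₃ : ℕ) : ZMod p) = -3 := by
      have h0 := Nat.div_add_mod h₃ p
      rw [hh₃] at h0
      calc ((h₃:ℕ) : ZMod p) = ((p * (h₃/p) + (p-3) : ℕ) : ZMod p) := by rw [h0]
      _ = -3 := by
          push_cast [Nat.cast_sub (show 3 ≤ p by omega)]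
          rw [ZMod.natCast_self]
          ring
    have hsa : (h₁ : ℕ) • a = -a := by
      rw [← Nat.cast_smul_eq_nsmul (ZMod p), hcast1, neg_one_smul]
    have hsc : (h₃ : ℕ) • c = -(c + c + c) := by
      rw [← Nat.cast_smul_eq_nsmul (ZMod p), hcast3]
      have h3 : (3 : ZMod p) • c = c + c + c := by
        rw [show (3:ZMod p) = 1 + 1 + 1 by norm_num, add_smul, add_smul, one_smul]
      rw [show (-3 : ZMod p) = -(3:ZMod p) by norm_num, neg_smul, h3]
    rw [hsa, hsc] at hesum
    -- set leaf sums
    set S1 : Fin k → ZMod p := ∑ j : Fin h₁, f (Sum.inr (Sum.inl j)) with hS1def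
    set S3 : Fin k → ZMod p := ∑ j : Fin h₃, f (Sum.inr (Sum.inr (Sum.inr j))) with hS3def
    have hV2 : S3 + ((a + b + c) + S1 + m) = 0 := by
      rw [show S3 + ((a + b + c) + S1 + m) = a + b + c + (S1 + (m + S3)) from by abel, hvsum]
    have hS3 : S3 = -((a + b + c) + S1 + m) := eq_neg_of_add_eq_zero_left hV2
    rw [hS3] at hesum
    apply neg_injective
    rw [← hesum]
    abel
  have hstar : ∀ w, Φ (w - d) - Φ w =
      ind (a = w) + ind (c = w) + ind (m = w)
      - ind (a + b - c = w) - ind (b + m - c = w) - ind (w = x - c) := by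
    intro w
    have hE := hEI (w + c)
    have hV := hVI w
    rw [show ind (a + b = w + c) = ind (a + b - c = w) from
          ind_congr (eq_iff_sub (by abel)),
        show ind (b + c = w + c) = ind (b = w) from
          ind_congr (eq_iff_sub (by abel)),
        show ind (b + m = w + c) = ind (b + m - c = w) from
          ind_congr (eq_iff_sub (by abel)),
        show ind (∃ j : Fin h₁, a + f (Sum.inr (Sum.inl j)) = w + c) = Φ (w - d) from by
          rw [hΦ]
          exact ind_congr (exists_congr fun j => eq_iff_sub (by rw [hddef]; abel)),
        show ind (∃ j : Fin h₃, c + f (Sum.inr (Sum.inr (Sum.inr j))) = w + c) = Ψ w from by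
          rw [hΨ]
          exact ind_congr (exists_congr fun j => eq_iff_sub (by abel)),
        show ind (w + c = x) = ind (w = x - c) from
          ind_congr (eq_iff_sub (by abel))] at hE
    linarith [hE, hV]
  have htwo : ∀ z w : Fin k → ZMod p, z + z = w + w → z = w := by
    intro z w h
    have h2 : (2:ZMod p) • (z - w) = 0 := by
      rw [two_smul]
      calc (z-w) + (z-w) = (z+z) - (w+w) := by abel
      _ = 0 := by rw [h, sub_self]
    exact sub_eq_zero.mp (smul_cancel h2ne h2)
  have hm2 : b + m - c = a := by
    have had : a - d = c := by rw [hddef]; abel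
    have h := hstar a
    rw [had, hPhic, hPhia, ind_pos rfl,
      ind_neg (fun hh : c = a => hac hh.symm),
      ind_neg (fun hh : m = a => ham hh.symm),
      ind_neg (show ¬(a + b - c = a) from fun hh => by
        have h9 : b - c = 0 := by
          calc b - c = (a + b - c) - a := by abel
          _ = 0 := by rw [hh, sub_self]
        exact hbc (sub_eq_zero.mp h9))] at h
    have hxc0 : ¬ (a = x - c) := by
      intro hh
      have hx2 : a + c = x := eq_sub_iff_add_eq.mp hh
      have e : a - (b + b) + (c + c + c) = a + c := by rw [← hxval, hx2]
      have h9 : (c + c) - (b + b) = 0 := by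
        calc (c + c) - (b + b) = (a - (b + b) + (c + c + c)) - (a + c) := by abel
        _ = 0 := by rw [e, sub_self]
      exact hbc (htwo b c (sub_eq_zero.mp h9).symm)
    by_contra hne
    rw [ind_neg hne, ind_neg hxc0] at h
    norm_num at h
  have hd0 : d ≠ 0 := fun h => hac (by rwa [hddef, sub_eq_zero] at h)
  have hsmul0 : ∀ s : ZMod p, s • d = 0 → s = 0 := by
    intro s hs
    by_contra hne
    exact hd0 (smul_cancel hne hs)
  have hlineinj : Function.Injective (fun s : ZMod p => b + s • d) := by
    intro s s' h
    have h2 : b + s • d = b + s' • d := h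
    have h3 : (s - s') • d = 0 := by
      rw [sub_smul, add_left_cancel h2, sub_self]
    have := hsmul0 _ h3
    rwa [sub_eq_zero] at this
  have hm3 : m = a + c - b := by rw [← hm2]; abel
  have hPd : ∀ z : Fin k → ZMod p,
      (∃ s : ZMod p, s • d = d + z) ↔ (∃ s : ZMod p, s • d = z) := by
    intro z
    constructor
    · rintro ⟨s, hs⟩
      exact ⟨s - 1, by rw [sub_smul, one_smul, hs]; abel⟩
    · rintro ⟨s, hs⟩
      exact ⟨s + 1, by rw [add_smul, one_smul, hs]; abel⟩
  have hPhalf : ∀ z : Fin k → ZMod p,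
      (∃ s : ZMod p, s • d = z + z) → (∃ s : ZMod p, s • d = z) := by
    rintro z ⟨s, hs⟩
    refine ⟨(2:ZMod p)⁻¹ * s, ?_⟩
    rw [mul_smul, hs, ← two_smul (ZMod p) z, inv_smul_smul₀ h2ne]
  have hEB : ∀ y, (∑ s : ZMod p, ind (y = b + s • d))
      = ind (∃ s : ZMod p, s • d = y - b) := by
    intro y
    calc ∑ s : ZMod p, ind (y = b + s • d) = ∑ s : ZMod p, ind (b + s • d = y) :=
      Finset.sum_congr rfl (fun s _ => ind_congr eq_comm)
    _ = ind (∃ s : ZMod p, b + s • d = y) := sum_ind _ hlineinj y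
    _ = _ := ind_congr (exists_congr fun s => eq_iff_sub (by abel))
  have hEB' : (∑ s : ZMod p, ind ((b + s • d) = x - c))
      = ind (∃ s : ZMod p, s • d = (x - c) - b) := by
    calc ∑ s : ZMod p, ind (b + s • d = x - c)
        = ind (∃ s : ZMod p, b + s • d = x - c) := sum_ind _ hlineinj _
    _ = _ := ind_congr (exists_congr fun s => eq_iff_sub (by abel))
  have htel : ∑ s : ZMod p, (Φ (b + s • d - d) - Φ (b + s • d)) = 0 := by
    rw [Finset.sum_sub_distrib]
    have hre : (∑ s : ZMod p, Φ (b + s • d - d)) = ∑ s : ZMod p, Φ (b + s • d) := by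
      calc ∑ s : ZMod p, Φ (b + s • d - d)
          = ∑ s : ZMod p, Φ (b + ((Equiv.subRight (1:ZMod p)) s) • d) :=
        Finset.sum_congr rfl (fun s _ => by
          rw [show b + s • d - d = b + (s - 1) • d from by rw [sub_smul, one_smul]; abel]
          rfl)
      _ = ∑ s : ZMod p, Φ (b + s • d) :=
        Equiv.sum_comp (Equiv.subRight (1:ZMod p)) (fun s => Φ (b + s • d))
    rw [hre, sub_self]
  have hkey : (0:ℤ) = ind (∃ s : ZMod p, s • d = a - b) + ind (∃ s : ZMod p, s • d = c - b)
      + ind (∃ s : ZMod p, s • d = m - b) - ind (∃ s : ZMod p, s • d = (a + b - c) - b)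
      - ind (∃ s : ZMod p, s • d = (b + m - c) - b)
      - ind (∃ s : ZMod p, s • d = (x - c) - b) := by
    calc (0:ℤ) = ∑ s : ZMod p, (Φ (b + s • d - d) - Φ (b + s • d)) := htel.symm
    _ = ∑ s : ZMod p, (ind (a = b + s • d) + ind (c = b + s • d) + ind (m = b + s • d)
        - ind (a + b - c = b + s • d) - ind (b + m - c = b + s • d)
        - ind ((b + s • d) = x - c)) :=
      Finset.sum_congr rfl (fun s _ => hstar (b + s • d))
    _ = _ := by
      simp only [Finset.sum_sub_distrib, Finset.sum_add_distrib]
      rw [hEB a, hEB c, hEB m, hEB (a + b - c), hEB (b + m - c), hEB']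
  have e1 : a - b = d + (c - b) := by rw [hddef]; abel
  have e2 : m - b = d + ((c - b) + (c - b)) := by rw [hm3, hddef]; abel
  have e3 : (a + b - c) - b = d := by rw [hddef]; abel
  have e4 : (b + m - c) - b = d + (c - b) := by rw [hm2]; exact e1
  have e5 : (x - c) - b = d + ((c - b) + (c - b) + (c - b)) := by rw [hxval, hddef]; abel
  rw [e1, e2, e3, e4, e5, ind_congr (hPd (c - b)),
    ind_congr (hPd ((c - b) + (c - b))), ind_congr (hPd ((c - b) + (c - b) + (c - b))),
    ind_pos (P := ∃ s : ZMod p, s • d = d) ⟨1, one_smul _ d⟩] at hkey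
  obtain ⟨t, htb⟩ : ∃ t : ZMod p, b = c + t • d := by
    rcases ind_cases (∃ s : ZMod p, s • d = c - b) with h0 | h1
    · have hnot : ¬ ∃ s : ZMod p, s • d = c - b := fun hh => by
        rw [ind_pos hh] at h0; norm_num at h0
      rw [h0] at hkey
      have h21 : ind (∃ s : ZMod p, s • d = (c - b) + (c - b)) = 1 := by
        have hA := ind_le_one (P := ∃ s : ZMod p, s • d = (c - b) + (c - b))
        have hB := ind_nonneg (P := ∃ s : ZMod p, s • d = (c - b) + (c - b) + (c - b))
        linarith
      exact absurd (hPhalf _ (ind_eq_one h21)) hnot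
    · obtain ⟨s, hs⟩ := ind_eq_one h1
      exact ⟨-s, by rw [neg_smul, hs]; abel⟩
  have ht0 : t ≠ 0 := fun h => hbc (by rw [htb, h, zero_smul, add_zero])
  have haL : a = c + (1 : ZMod p) • d := by rw [one_smul, hddef]; abel
  have haL2 : a = c + d := by rw [hddef]; abel
  have hcL : c = c + (0 : ZMod p) • d := by rw [zero_smul, add_zero]
  have hmL : m = c + (1 - t) • d := by
    rw [hm3, htb, haL2, sub_smul, one_smul]; abel
  have habcL : a + b - c = c + (1 + t) • d := by
    rw [htb, haL2, add_smul, one_smul]; abel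
  have hxcL : x - c = c + (1 - t - t) • d := by
    rw [hxval, htb, haL2, sub_smul, sub_smul, one_smul]; abel
  have hconst : ∀ r : Fin k → ZMod p, (∀ s : ZMod p, r ≠ c + s • d) →
      ∀ s : ZMod p, Φ (r + s • d) = Φ r := by
    intro r hr
    have hall : ∀ s' s'' : ZMod p, r + s' • d ≠ c + s'' • d := by
      intro s' s'' heq
      apply hr (s'' - s')
      rw [sub_smul]
      calc r = r + s' • d - s' • d := by abel
      _ = c + s'' • d - s' • d := by rw [heq]
      _ = c + (s'' • d - s' • d) := by abel
    have key : ∀ n : ℕ, Φ (r + (n : ZMod p) • d) = Φ r := by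
      intro n
      induction n with
      | zero => simp
      | succ n ih =>
        have hw := hstar (r + ((n + 1 : ℕ) : ZMod p) • d)
        have z1 : ind (a = r + ((n + 1 : ℕ) : ZMod p) • d) = 0 :=
          ind_neg (fun hh => hall _ 1 (hh.symm.trans haL))
        have z2 : ind (c = r + ((n + 1 : ℕ) : ZMod p) • d) = 0 :=
          ind_neg (fun hh => hall _ 0 (hh.symm.trans hcL))
        have z3 : ind (m = r + ((n + 1 : ℕ) : ZMod p) • d) = 0 :=
          ind_neg (fun hh => hall _ (1 - t) (hh.symm.trans hmL))
        have z4 : ind (a + b - c = r + ((n + 1 : ℕ) : ZMod p) • d) = 0 :=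
          ind_neg (fun hh => hall _ (1 + t) (hh.symm.trans habcL))
        have z5 : ind (b + m - c = r + ((n + 1 : ℕ) : ZMod p) • d) = 0 :=
          ind_neg (fun hh => hall _ 1 (hh.symm.trans
            (show b + m - c = c + (1:ZMod p) • d from by rw [hm2]; exact haL)))
        have z6 : ind ((r + ((n + 1 : ℕ) : ZMod p) • d) = x - c) = 0 :=
          ind_neg (fun hh => hall _ (1 - t - t) (hh.trans hxcL))
        have hwd : r + ((n + 1 : ℕ) : ZMod p) • d - d = r + ((n : ℕ) : ZMod p) • d := by
          push_cast
          rw [add_smul, one_smul]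
          abel
        rw [z1, z2, z3, z4, z5, z6, hwd] at hw
        linarith [hw, ih]
    intro s
    obtain ⟨n, rfl⟩ := ZMod.natCast_zmod_surjective s
    exact key n
  obtain ⟨i₀, hi₀⟩ : ∃ i, d i ≠ 0 := by
    by_contra h; push_neg at h; exact hd0 (funext h)
  set σ : ZMod p := c i₀ / d i₀ with hσdef
  set rc : Fin k → ZMod p := c - σ • d with hrcdef
  have hrc0 : rc i₀ = 0 := by
    simp only [hrcdef, Pi.sub_apply, Pi.smul_apply, smul_eq_mul, hσdef]
    rw [div_mul_cancel₀ _ hi₀, sub_self]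
  have hrcσ : rc + σ • d = c := by rw [hrcdef]; abel
  have hPhiTot : ∑ w : Fin k → ZMod p, Φ w = (h₁ : ℤ) := by
    calc ∑ w : Fin k → ZMod p, Φ w
        = ∑ w : Fin k → ZMod p, ∑ j : Fin h₁, ind (f (Sum.inr (Sum.inl j)) = w) :=
          Finset.sum_congr rfl (fun w _ => by rw [hΦ, ← sum_ind _ inj1 w])
    _ = ∑ j : Fin h₁, ∑ w : Fin k → ZMod p, ind (f (Sum.inr (Sum.inl j)) = w) :=
          Finset.sum_comm
    _ = ∑ _j : Fin h₁, (1:ℤ) := Finset.sum_congr rfl (fun j _ => by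
          calc ∑ w : Fin k → ZMod p, ind (f (Sum.inr (Sum.inl j)) = w)
              = ∑ w : Fin k → ZMod p, ind ((fun v => v) w = f (Sum.inr (Sum.inl j))) :=
                Finset.sum_congr rfl (fun w _ => ind_congr eq_comm)
          _ = ind (∃ w : Fin k → ZMod p, (fun v => v) w = f (Sum.inr (Sum.inl j))) :=
                sum_ind (fun v => v) (fun _ _ h => h) _
          _ = 1 := ind_pos ⟨_, rfl⟩)
    _ = (h₁ : ℤ) := by simp
  obtain ⟨E, hE⟩ : ∃ E : (ZMod p × {r : Fin k → ZMod p // r i₀ = 0}) ≃ (Fin k → ZMod p),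
      ∀ q, E q = q.2.val + q.1 • d := by
    refine ⟨{ toFun := fun q => q.2.val + q.1 • d
              invFun := fun w => (w i₀ / d i₀, ⟨w - (w i₀ / d i₀) • d, by
                simp only [Pi.sub_apply, Pi.smul_apply, smul_eq_mul]
                rw [div_mul_cancel₀ _ hi₀, sub_self]⟩)
              left_inv := ?_
              right_inv := ?_ }, fun q => rfl⟩
    · rintro ⟨s, r, hr⟩
      have hco : (r + s • d) i₀ / d i₀ = s := by
        simp only [Pi.add_apply, Pi.smul_apply, smul_eq_mul, hr, zero_add]
        exact mul_div_cancel_right₀ s hi₀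
      simp only [hco]
      exact Prod.ext rfl (Subtype.ext (by module))
    · intro w
      show w - (w i₀ / d i₀) • d + (w i₀ / d i₀) • d = w
      module
  have hsplit : (h₁ : ℤ) =
      ∑ r : {r : Fin k → ZMod p // r i₀ = 0}, ∑ s : ZMod p, Φ (r.val + s • d) := by
    calc (h₁ : ℤ) = ∑ w : Fin k → ZMod p, Φ w := hPhiTot.symm
    _ = ∑ q : ZMod p × {r : Fin k → ZMod p // r i₀ = 0}, Φ (E q) :=
        (Equiv.sum_comp E Φ).symm
    _ = ∑ q : ZMod p × {r : Fin k → ZMod p // r i₀ = 0}, Φ (q.2.val + q.1 • d) :=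
        Finset.sum_congr rfl (fun q _ => by rw [hE])
    _ = ∑ s : ZMod p, ∑ r : {r : Fin k → ZMod p // r i₀ = 0}, Φ (r.val + s • d) := by
        rw [Fintype.sum_prod_type]
    _ = _ := Finset.sum_comm
  have hoffr : ∀ r : {r : Fin k → ZMod p // r i₀ = 0}, r.val ≠ rc →
      ∀ s : ZMod p, r.val ≠ c + s • d := by
    rintro ⟨r, hr⟩ hne s heq
    apply hne
    have h9 := congrFun heq i₀
    simp only [Pi.add_apply, Pi.smul_apply, smul_eq_mul] at h9
    rw [hr] at h9
    have hs : s = -σ := by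
      rw [hσdef]
      field_simp
      linear_combination -h9
    rw [heq, hs, neg_smul, hrcdef]
    abel
  have hdvd : (p:ℤ) ∣ ((h₁:ℤ) - ∑ s : ZMod p, Φ (rc + s • d)) := by
    have hrc' : (⟨rc, hrc0⟩ : {r : Fin k → ZMod p // r i₀ = 0}).val = rc := rfl
    rw [← Finset.sum_erase_add Finset.univ _
      (Finset.mem_univ (⟨rc, hrc0⟩ : {r : Fin k → ZMod p // r i₀ = 0}))] at hsplit
    have hrest : (h₁:ℤ) - ∑ s : ZMod p, Φ (rc + s • d)
        = ∑ r ∈ Finset.univ.erase (⟨rc, hrc0⟩ : {r : Fin k → ZMod p // r i₀ = 0}),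
            ∑ s : ZMod p, Φ (r.val + s • d) := by
      rw [hsplit, hrc']
      abel
    rw [hrest]
    refine Finset.dvd_sum ?_
    intro r hrmem
    have hrvne : r.val ≠ rc := fun hval =>
      (Finset.mem_erase.mp hrmem).1 (Subtype.ext hval)
    have hconst' := hconst r.val (hoffr r hrvne)
    calc (p:ℤ) ∣ ∑ s : ZMod p, Φ r.val := by
          rw [Finset.sum_const, Finset.card_univ, ZMod.card, nsmul_eq_mul]
          exact dvd_mul_right _ _
    _ = ∑ s : ZMod p, Φ (r.val + s • d) :=
          (Finset.sum_congr rfl (fun s _ => hconst' s)).symm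
  have hN0 : 0 ≤ ∑ s : ZMod p, Φ (rc + s • d) :=
    Finset.sum_nonneg (fun s _ => ind_nonneg)
  have hNle : ∑ s : ZMod p, Φ (rc + s • d) ≤ (p:ℤ) - 2 := by
    have hmem1 : σ + t ∈ Finset.univ.erase σ :=
      Finset.mem_erase.mpr ⟨fun h => ht0 (by rwa [add_eq_left] at h), Finset.mem_univ _⟩
    have hsum1 := Finset.sum_erase_add Finset.univ (fun s => Φ (rc + s • d)) (Finset.mem_univ σ)
    have hsum2 := Finset.sum_erase_add (Finset.univ.erase σ) (fun s => Φ (rc + s • d)) hmem1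
    have hv1 : Φ (rc + σ • d) = 0 := by rw [hrcσ]; exact hPhic
    have hbpt : rc + (σ + t) • d = b := by
      rw [add_smul, ← add_assoc, hrcσ, ← htb]
    have hv2 : Φ (rc + (σ + t) • d) = 0 := by rw [hbpt]; exact hPhib
    have hbound : ∑ s ∈ (Finset.univ.erase σ).erase (σ + t), Φ (rc + s • d)
        ≤ (((Finset.univ.erase σ).erase (σ + t)).card : ℤ) := by
      calc ∑ s ∈ (Finset.univ.erase σ).erase (σ + t), Φ (rc + s • d)
          ≤ ∑ _s ∈ (Finset.univ.erase σ).erase (σ + t), (1:ℤ) :=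
            Finset.sum_le_sum (fun s _ => ind_le_one)
      _ = _ := by rw [Finset.sum_const, nsmul_eq_mul, mul_one]
    have hcard : (((Finset.univ.erase σ).erase (σ + t)).card : ℤ) = (p:ℤ) - 2 := by
      rw [Finset.card_erase_of_mem hmem1,
        Finset.card_erase_of_mem (Finset.mem_univ σ), Finset.card_univ, ZMod.card,
        Nat.sub_sub, Nat.cast_sub (show 1 + 1 ≤ p by linarith)]
      norm_num
    rw [← hsum1, ← hsum2]
    beta_reduce
    rw [hv1, hv2]
    rw [hcard] at hbound
    linarith
  obtain ⟨q, hq⟩ := hdvd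
  obtain ⟨D, hD⟩ : ∃ D : ℤ, (h₁ : ℤ) = p * D + ((p:ℤ) - 1) := by
    refine ⟨(h₁ / p : ℕ), ?_⟩
    have h0 := Nat.div_add_mod h₁ p
    rw [hh₁] at h0
    have h1 := congrArg (Nat.cast : ℕ → ℤ) h0
    rw [Nat.cast_add, Nat.cast_mul, Nat.cast_sub (show 1 ≤ p by linarith)] at h1
    push_cast at h1 ⊢
    linarith
  set N : ℤ := ∑ s : ZMod p, Φ (rc + s • d) with hNdef
  have hNval : N = (p:ℤ) * (D - q) + ((p:ℤ) - 1) := by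
    rw [mul_sub]; linarith
  rcases le_or_gt 0 (D - q) with hQ | hQ
  · have : 0 ≤ (p:ℤ) * (D - q) := mul_nonneg (by positivity) hQ
    linarith
  · have hQ1 : (D - q : ℤ) ≤ -1 := by
      have := Int.le_sub_one_of_lt hQ
      simpa using this
    have : (p:ℤ) * (D - q) ≤ (p:ℤ) * (-1) :=
      mul_le_mul_of_nonneg_left hQ1 (by positivity)
    linarith
end

section
/- Let A be a finite Abelian group of exponent m > 2 and order n, and let T = C(h₁, h₂) be a caterpillar with two spine vertices and n vertices total. If h₁ ≡ m−1 (mod m), then T has no A-rainbow labeling. -/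
/-- Edge-label function of the caterpillar `C(h₁,h₂)` (two adjacent spine vertices with
`h₁` and `h₂` pendant leaves) induced by a vertex labeling `f`. -/
def catLabel2 {A : Type*} [AddCommGroup A] {h₁ h₂ : ℕ}
    (f : Fin 2 ⊕ (Fin h₁ ⊕ Fin h₂) → A) : Unit ⊕ (Fin h₁ ⊕ Fin h₂) → A
  | .inl _ => f (.inl 0) + f (.inl 1)
  | .inr (.inl j) => f (.inl 0) + f (.inr (.inl j))
  | .inr (.inr j) => f (.inl 1) + f (.inr (.inr j))

/-- The caterpillar `C(h₁,h₂)` has an `A`-rainbow labeling. -/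
def IsRainbowCat2 (h₁ h₂ : ℕ) (A : Type*) [AddCommGroup A] : Prop :=
  ∃ f : Fin 2 ⊕ (Fin h₁ ⊕ Fin h₂) → A,
    Function.Bijective f ∧ Function.Injective (catLabel2 f)

private lemma smul_eq_neg_aux {A : Type*} [AddCommGroup A] {m k : ℕ} (hm : 0 < m)
    (hk : k % m = m - 1) {x : A} (hx : m • x = 0) : k • x = -x := by
  have h1 : m * (k / m) + (m - 1) = k := by
    rw [← hk]; exact Nat.div_add_mod k m
  have h2 : (m - 1) • x + x = 0 := by
    rw [← succ_nsmul]
    have hmm : m - 1 + 1 = m := by omega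
    rw [hmm, hx]
  calc k • x = (m * (k / m) + (m - 1)) • x := by rw [h1]
    _ = (k / m) • (m • x) + (m - 1) • x := by rw [add_nsmul, mul_nsmul, smul_comm]
    _ = (m - 1) • x := by rw [hx, smul_zero, zero_add]
    _ = -x := eq_neg_of_add_eq_zero_left h2

theorem stmt13 {A : Type*} [AddCommGroup A] [Fintype A] (m n h₁ h₂ : ℕ)
    (hexp : AddMonoid.exponent A = m) (hm : 2 < m)
    (hn : Fintype.card A = n) (horder : h₁ + h₂ + 2 = n)
    (hh₁ : h₁ % m = m - 1) :
    ¬ IsRainbowCat2 h₁ h₂ A := by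
  classical
  rintro ⟨f, hbij, hinj⟩
  have hm0 : 0 < m := by omega
  haveI : NeZero m := ⟨by omega⟩
  set a := f (.inl 0) with ha
  set b := f (.inl 1) with hb
  set g := catLabel2 f with hg
  have hsmul : ∀ x : A, m • x = 0 := fun x => by
    rw [← hexp]; exact AddMonoid.exponent_nsmul_eq_zero x
  have hdvd : m ∣ n := by
    rw [← hexp, ← hn]; exact AddGroup.exponent_dvd_card
  -- h₂ % m = m - 1
  have hcastm1 : ((m - 1 : ℕ) : ZMod m) = -1 := by
    have : ((m - 1 : ℕ) : ZMod m) = (m : ZMod m) - 1 := by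
      push_cast [Nat.cast_sub (by omega : 1 ≤ m)]; ring
    rw [this, ZMod.natCast_self, zero_sub]
  have c1 : (h₁ : ZMod m) = -1 := by
    rw [← ZMod.natCast_mod, hh₁, hcastm1]
  have c2 : (h₂ : ZMod m) = -1 := by
    have hn0 : ((n : ℕ) : ZMod m) = 0 := (ZMod.natCast_eq_zero_iff n m).mpr hdvd
    have := horder
    have hcast : ((h₁ : ZMod m) + h₂ + 2) = 0 := by
      rw [← hn0, ← horder]; push_cast; ring
    rw [c1] at hcast
    have h2eq : (h₂ : ZMod m) = -1 - ((2 : ZMod m) - 2) := by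
      linear_combination hcast
    simpa using h2eq
  have hh₂ : h₂ % m = m - 1 := by
    have hv : (h₂ : ZMod m).val = ((m - 1 : ℕ) : ZMod m).val := by rw [c2, hcastm1]
    rw [ZMod.val_natCast, ZMod.val_natCast] at hv
    have h3 : (m - 1) % m = m - 1 := Nat.mod_eq_of_lt (by omega)
    omega
  -- sums
  have hsumA : ∑ v, f v = ∑ x : A, x :=
    Fintype.sum_bijective f hbij f id (fun _ => rfl)
  have hsumV : ∑ v, f v = a + b + (∑ j : Fin h₁, f (.inr (.inl j)) + ∑ j : Fin h₂, f (.inr (.inr j))) := by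
    rw [Fintype.sum_sum_type, Fintype.sum_sum_type, Fin.sum_univ_two]
  have hsumE : ∑ e, g e = (a + b) + (h₁ • a + ∑ j : Fin h₁, f (.inr (.inl j)))
      + (h₂ • b + ∑ j : Fin h₂, f (.inr (.inr j))) := by
    rw [Fintype.sum_sum_type, Fintype.sum_sum_type]
    simp only [hg, catLabel2, Finset.sum_add_distrib, Finset.sum_const, Finset.card_univ,
      Fintype.card_fin, Fintype.card_unit, one_smul]
    abel
  have hsumE' : ∑ e, g e = (∑ x : A, x) - a - b := by
    rw [hsumE, smul_eq_neg_aux hm0 hh₁ (hsmul a), smul_eq_neg_aux hm0 hh₂ (hsmul b)]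
    have hS : (∑ x : A, x) = a + b + (∑ j : Fin h₁, f (.inr (.inl j)) + ∑ j : Fin h₂, f (.inr (.inr j))) := by
      rw [← hsumA, hsumV]
    rw [hS]; abel
  -- image argument
  set s := Finset.image g Finset.univ with hs
  have hcards : s.card = h₁ + h₂ + 1 := by
    rw [hs, Finset.card_image_of_injective _ hinj]
    simp [Finset.card_univ]
    omega
  have hcardc : sᶜ.card = 1 := by
    rw [Finset.card_compl, hcards, hn]; omega
  obtain ⟨c, hc⟩ := Finset.card_eq_one.mp hcardc
  have hsc : s = {c}ᶜ := by rw [← hc, compl_compl]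
  have hsumS : ∑ x ∈ s, x = ∑ e, g e :=
    Finset.sum_image (fun x _ y _ h => hinj h)
  have hsumS' : ∑ x ∈ s, x = (∑ x : A, x) - c := by
    rw [hsc]
    have h4 := Finset.sum_compl_add_sum ({c} : Finset A) (fun x => x)
    rw [Finset.sum_singleton] at h4
    exact eq_sub_of_add_eq h4
  have hceq : c = a + b := by
    have h5 : (∑ x : A, x) - c = (∑ x : A, x) - (a + b) := by
      rw [← hsumS', hsumS, hsumE', sub_sub]
    exact sub_right_injective h5
  have hmem : a + b ∈ s := by
    rw [hs]
    exact Finset.mem_image.mpr ⟨.inl (), Finset.mem_univ _, rfl⟩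
  rw [hsc, hceq] at hc
  rw [hsc, Finset.mem_compl, Finset.mem_singleton] at hmem
  exact hmem hceq.symm
end
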